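/- arXiv:2207.07234 — 3 statements merged into one kernel-verified Lean document; each statement's English description precedes it below -/
import Mathlib

section
/- Let A and K be real N×N matrices with K symmetric positive definite. If ν is a nonzero eigenvalue of A^T K^{-1} A and σ, τ > 0 are real numbers, then the block matrix M = [[I - 2στ A^T K^{-1} A, -σ A^T],[τ K^{-1} A, I]] has the property that λ = (1 - στν) ± i·(στν - (στν)²)^{1/2} are eigenvalues of M whenever 0 < στν < 1. -/
/-!
If `v` is an eigenvector of `AᵀK⁻¹A` for `ν` and `μ = στν`, then `((λ - 1) v, τ K⁻¹A v)` is an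
eigenvector of `M` for every root `λ` of `(λ - (1 - μ))² = μ² - μ`; it is nonzero because `λ = 1`
would force `μ = 0`. For `0 < μ < 1` these roots are `(1 - μ) ± i √(μ - μ²)`.
-/

open Matrix

variable {n m : Type*} [Fintype m] [DecidableEq n] [DecidableEq m]

def blockIterMatrix {R : Type*} [CommRing R] (σ τ : R) (P : Matrix n m R) (Q : Matrix m n R) :
    Matrix (n ⊕ m) (n ⊕ m) R :=
  fromBlocks (1 - (2 * σ * τ) • (P * Q)) (-(σ • P)) (τ • Q) 1

theorem blockIterMatrix_map {R S : Type*} [CommRing R] [CommRing S] (f : R →+* S)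
    (σ τ : R) (P : Matrix n m R) (Q : Matrix m n R) :
    (blockIterMatrix σ τ P Q).map f = blockIterMatrix (f σ) (f τ) (P.map f) (Q.map f) := by
  rw [blockIterMatrix, blockIterMatrix, fromBlocks_map]
  congr 1 <;> ext <;> simp [Matrix.one_apply, apply_ite f, map_ofNat, RingHom.map_matrix_mul]

section Field

variable [Fintype n] {𝕜 : Type*} [Field 𝕜] {σ τ ν l : 𝕜} {P : Matrix n m 𝕜} {Q : Matrix m n 𝕜}
  {v : n → 𝕜}

theorem blockIterMatrix_mulVec (hv : (P * Q) *ᵥ v = ν • v)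
    (hl : (l - (1 - σ * τ * ν)) ^ 2 = (σ * τ * ν) ^ 2 - σ * τ * ν) :
    blockIterMatrix σ τ P Q *ᵥ Sum.elim ((l - 1) • v) (τ • Q *ᵥ v) =
      l • Sum.elim ((l - 1) • v) (τ • Q *ᵥ v) := by
  ext (i | i)
  · simp only [blockIterMatrix, fromBlocks_mulVec, Sum.elim_comp_inl, mulVec_smul, sub_mulVec,
      one_mulVec, smul_mulVec, hv, Sum.elim_comp_inr, mulVec_mulVec, Matrix.neg_mul, smul_mul,
      neg_mulVec, smul_neg, Matrix.one_mul, Sum.elim_inl, Pi.add_apply, Pi.smul_apply,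
      Pi.sub_apply, smul_eq_mul, Pi.neg_apply]
    linear_combination (-v i) * hl
  · simp only [blockIterMatrix, fromBlocks_mulVec, Sum.elim_comp_inl, mulVec_smul,
      Sum.elim_comp_inr, mulVec_mulVec, Matrix.neg_mul, smul_mul, smul_mulVec, Matrix.one_mul,
      Sum.elim_inr, Pi.add_apply, Pi.smul_apply, smul_eq_mul]
    ring

theorem det_blockIterMatrix_sub_smul_one (hv0 : v ≠ 0) (hv : (P * Q) *ᵥ v = ν • v)
    (hμ : σ * τ * ν ≠ 0) (hl : (l - (1 - σ * τ * ν)) ^ 2 = (σ * τ * ν) ^ 2 - σ * τ * ν) :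
    (blockIterMatrix σ τ P Q - l • 1).det = 0 := by
  have hl1 : l - 1 ≠ 0 := by
    intro h
    rw [sub_eq_zero.mp h] at hl
    exact hμ (by linear_combination hl)
  rw [← exists_mulVec_eq_zero_iff]
  refine ⟨_, fun h => ?_, by
    rw [sub_mulVec, blockIterMatrix_mulVec hv hl, smul_mulVec, one_mulVec, sub_self]⟩
  exact hv0 (smul_right_injective _ hl1 (by simpa using congrArg (· ∘ Sum.inl) h))

end Field

theorem stmt_0_general {N : ℕ} (A K : Matrix (Fin N) (Fin N) ℝ)
    (ν σ τ : ℝ)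
    (hνeig : ∃ v : Fin N → ℝ, v ≠ 0 ∧ (Aᵀ * K⁻¹ * A).mulVec v = ν • v)
    (h0 : 0 < σ * τ * ν) (h1 : σ * τ * ν < 1) :
    let M : Matrix (Fin N ⊕ Fin N) (Fin N ⊕ Fin N) ℝ :=
      Matrix.fromBlocks (1 - (2 * σ * τ) • (Aᵀ * K⁻¹ * A)) (-(σ • Aᵀ)) (τ • (K⁻¹ * A)) 1
    let Mc : Matrix (Fin N ⊕ Fin N) (Fin N ⊕ Fin N) ℂ := M.map (Complex.ofReal)
    let s : ℝ := Real.sqrt (σ * τ * ν - (σ * τ * ν) ^ 2)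
    ((Mc - ((1 - σ * τ * ν : ℝ) + Complex.I * (s : ℝ)) • 1).det = 0 ∧
     (Mc - ((1 - σ * τ * ν : ℝ) - Complex.I * (s : ℝ)) • 1).det = 0) := by
  intro M Mc s
  obtain ⟨v, hv0, hv⟩ := hνeig
  set f := Complex.ofRealHom
  have hM : M = blockIterMatrix σ τ Aᵀ (K⁻¹ * A) := by
    simp only [M, blockIterMatrix, Matrix.mul_assoc]
  have hMc : Mc = blockIterMatrix (f σ) (f τ) (Aᵀ.map f) ((K⁻¹ * A).map f) := by
    rw [← blockIterMatrix_map, ← hM]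
    rfl
  have hvc : (Aᵀ.map f * (K⁻¹ * A).map f) *ᵥ (f ∘ v) = (ν : ℂ) • (f ∘ v) := by
    ext i
    rw [← Matrix.map_mul, ← RingHom.map_mulVec, ← Matrix.mul_assoc, hv]
    simp [f]
  have hvc0 : f ∘ v ≠ 0 := fun h => hv0 (funext fun i => by simpa [f] using congrFun h i)
  have hs : (s : ℂ) ^ 2 = σ * τ * ν - (σ * τ * ν) ^ 2 := by
    rw [← Complex.ofReal_pow, Real.sq_sqrt (by nlinarith)]
    push_cast
    ring
  have hμ : ((σ * τ * ν : ℝ) : ℂ) ≠ 0 := Complex.ofReal_ne_zero.mpr h0.ne'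
  rw [hMc]
  push_cast at hμ ⊢
  constructor <;> refine det_blockIterMatrix_sub_smul_one hvc0 hvc hμ ?_ <;>
    linear_combination Complex.I ^ 2 * hs + (σ * τ * ν - (σ * τ * ν : ℂ) ^ 2) * Complex.I_sq

/-- If ν is a nonzero eigenvalue of AᵀK⁻¹A (K symmetric positive definite) and
σ, τ > 0 with 0 < στν < 1, then λ = (1-στν) ± i(στν-(στν)²)^{1/2} are (complex)
eigenvalues of the block matrix M = [[I - 2στ AᵀK⁻¹A, -σAᵀ],[τK⁻¹A, I]]. -/
theorem stmt_0 {N : ℕ} (A K : Matrix (Fin N) (Fin N) ℝ) (hK : K.PosDef)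
    (ν σ τ : ℝ) (hν : ν ≠ 0)
    (hνeig : ∃ v : Fin N → ℝ, v ≠ 0 ∧ (Aᵀ * K⁻¹ * A).mulVec v = ν • v)
    (hσ : 0 < σ) (hτ : 0 < τ) (h0 : 0 < σ * τ * ν) (h1 : σ * τ * ν < 1) :
    let M : Matrix (Fin N ⊕ Fin N) (Fin N ⊕ Fin N) ℝ :=
      Matrix.fromBlocks (1 - (2 * σ * τ) • (Aᵀ * K⁻¹ * A)) (-(σ • Aᵀ)) (τ • (K⁻¹ * A)) 1
    let Mc : Matrix (Fin N ⊕ Fin N) (Fin N ⊕ Fin N) ℂ := M.map (Complex.ofReal)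
    let s : ℝ := Real.sqrt (σ * τ * ν - (σ * τ * ν) ^ 2)
    ((Mc - ((1 - σ * τ * ν : ℝ) + Complex.I * (s : ℝ)) • 1).det = 0 ∧
     (Mc - ((1 - σ * τ * ν : ℝ) - Complex.I * (s : ℝ)) • 1).det = 0) :=
  stmt_0_general A K ν σ τ hνeig h0 h1
end

section
/- Let A, K : ℝ^N → ℝ^N be linear maps with A invertible and K symmetric positive definite, and let c ∈ ℝ^N with u* the unique solution of A u = c. Suppose σ, τ > 0 satisfy στ·‖A^T K^{-1} A‖ < 1. Define the iteration: φ^{n+1} = φ^n + τ K^{-1}(A u^n − c), u^{n+1} = u^n − σ A^T φ^n − 2στ A^T K^{-1}(A u^n − c). Then for any initial data (u^0, φ^0), the sequence A u^n converges to A u* = c as n → ∞. -/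
/-!
Shifting to `z = u - A⁻¹c` and `p = σAᵀφ` turns the iteration into `z' = z - p - 2s G z`,
`p' = p + s G z` with `G = AᵀK⁻¹A` positive definite and `s = στ`. In an orthonormal eigenbasis
of `G` it decouples into the scalar recursions `a' = a - b - 2νa`, `b' = b + νa`, where
`ν = sλ ∈ (0, 1)` because `λ ≤ ‖G‖`. The positive definite form `(b + νa)² + ν(1 - ν)a²` is
multiplied by `1 - ν` at every step of such a recursion, so `a → 0`; hence `z → 0` and `Au → c`.
-/

open Matrix Filter Topology

theorem tendsto_zero_of_damped_recurrence {ν : ℝ} (hν0 : 0 < ν) (hν1 : ν < 1) {a b : ℕ → ℝ}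
    (ha : ∀ n, a (n + 1) = a n - b n - 2 * ν * a n)
    (hb : ∀ n, b (n + 1) = b n + ν * a n) :
    Tendsto a atTop (𝓝 0) := by
  set W : ℕ → ℝ := fun n => (b n + ν * a n) ^ 2 + ν * (1 - ν) * a n ^ 2
  have hW : ∀ n, W n = (1 - ν) ^ n * W 0 := by
    intro n
    induction n with
    | zero => simp
    | succ n ih =>
      rw [pow_succ, mul_comm _ (1 - ν), mul_assoc, ← ih]
      simp only [W, ha, hb]
      ring
  have hWlim : Tendsto W atTop (𝓝 0) := by
    simpa [← hW] using
      (tendsto_pow_atTop_nhds_zero_of_lt_one (by linarith) (by linarith : 1 - ν < 1)).mul_const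
        (W 0)
  have hκ : 0 < ν * (1 - ν) := mul_pos hν0 (by linarith)
  have hsq : Tendsto (fun n => a n ^ 2) atTop (𝓝 0) := by
    refine squeeze_zero (fun n => sq_nonneg _) (fun n => ?_)
      (by simpa using hWlim.div_const (ν * (1 - ν)))
    rw [le_div_iff₀' hκ]
    nlinarith [sq_nonneg (b n + ν * a n)]
  rw [tendsto_zero_iff_abs_tendsto_zero]
  simpa [Real.sqrt_sq_eq_abs, Function.comp_def] using hsq.sqrt

namespace Matrix.IsHermitian

variable {𝕜 n : Type*} [RCLike 𝕜] [Fintype n] [DecidableEq n] {A : Matrix n n 𝕜}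

theorem abs_eigenvalues_le_norm (hA : A.IsHermitian) (i : n) :
    |hA.eigenvalues i| ≤ ‖(toEuclideanLin A).toContinuousLinearMap‖ := by
  have hv : ‖hA.eigenvectorBasis i‖ = 1 := hA.eigenvectorBasis.orthonormal.1 i
  have hAv : toEuclideanLin A (hA.eigenvectorBasis i) =
      hA.eigenvalues i • hA.eigenvectorBasis i := by
    ext j
    simpa [toLpLin_apply] using congrFun (hA.mulVec_eigenvectorBasis i) j
  simpa [hAv, norm_smul, hv] using
    (toEuclideanLin A).toContinuousLinearMap.le_opNorm (hA.eigenvectorBasis i)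

theorem star_eigenvectorUnitary_mulVec_mulVec (hA : A.IsHermitian) (x : n → 𝕜) (i : n) :
    (star (hA.eigenvectorUnitary : Matrix n n 𝕜) *ᵥ (A *ᵥ x)) i =
      hA.eigenvalues i * (star (hA.eigenvectorUnitary : Matrix n n 𝕜) *ᵥ x) i := by
  have hD : star (hA.eigenvectorUnitary : Matrix n n 𝕜) * A =
      diagonal (RCLike.ofReal ∘ hA.eigenvalues) * star (hA.eigenvectorUnitary : Matrix n n 𝕜) := by
    rw [← hA.conjStarAlgAut_star_eigenvectorUnitary, Unitary.conjStarAlgAut_star_apply,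
      mul_assoc _ _ (star _), Unitary.mul_star_self_of_mem hA.eigenvectorUnitary.2, mul_one]
  rw [mulVec_mulVec, hD, ← mulVec_mulVec, mulVec_diagonal, Function.comp_apply]

end Matrix.IsHermitian

theorem tendsto_zero_of_primalDual_iteration {n : Type*} [Fintype n] [DecidableEq n]
    {G : Matrix n n ℝ} (hG : G.IsHermitian) {s : ℝ} (hs0 : ∀ i, 0 < s * hG.eigenvalues i)
    (hs1 : ∀ i, s * hG.eigenvalues i < 1) {z p : ℕ → n → ℝ}
    (hz : ∀ k, z (k + 1) = z k - p k - (2 * s) • (G *ᵥ z k))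
    (hp : ∀ k, p (k + 1) = p k + s • (G *ᵥ z k)) :
    Tendsto z atTop (𝓝 0) := by
  set U : Matrix n n ℝ := (hG.eigenvectorUnitary : Matrix n n ℝ)
  have hcoord : Tendsto (fun k => star U *ᵥ z k) atTop (𝓝 0) := by
    refine tendsto_pi_nhds.2 fun i => tendsto_zero_of_damped_recurrence (hs0 i) (hs1 i)
      (b := fun k => (star U *ᵥ p k) i) (fun k => ?_) (fun k => ?_)
    · simp only [hz, mulVec_sub, mulVec_smul, Pi.sub_apply, Pi.smul_apply, smul_eq_mul,
        U, hG.star_eigenvectorUnitary_mulVec_mulVec, Real.ringHom_apply]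
      ring
    · simp only [hp, mulVec_add, mulVec_smul, Pi.add_apply, Pi.smul_apply, smul_eq_mul,
        U, hG.star_eigenvectorUnitary_mulVec_mulVec, Real.ringHom_apply]
      ring
  have hU : ∀ k, U *ᵥ (star U *ᵥ z k) = z k := fun k => by
    rw [mulVec_mulVec, Unitary.mul_star_self_of_mem hG.eigenvectorUnitary.2, one_mulVec]
  simpa only [Function.comp_def, id, hU] using
    ((continuous_const.matrix_mulVec continuous_id).tendsto' 0 0 (mulVec_zero U)).comp hcoord

/-- PDHG iteration for linear Au = c: if στ‖AᵀK⁻¹A‖ < 1 (A invertible, K SPD),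
then for any initial data the sequence A uⁿ converges to A u* = c. -/
theorem stmt_2 {N : ℕ} (A K : Matrix (Fin N) (Fin N) ℝ)
    (hA : IsUnit A.det) (hK : K.PosDef) (c : Fin N → ℝ)
    (σ τ : ℝ) (hσ : 0 < σ) (hτ : 0 < τ)
    (hnorm : σ * τ *
      ‖LinearMap.toContinuousLinearMap (Matrix.toEuclideanLin (Aᵀ * K⁻¹ * A))‖ < 1)
    (u φ : ℕ → Fin N → ℝ)
    (hφ : ∀ n, φ (n + 1) = φ n + τ • (K⁻¹.mulVec (A.mulVec (u n) - c)))
    (hu : ∀ n, u (n + 1) = u n - σ • (Aᵀ.mulVec (φ n))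
      - (2 * σ * τ) • (Aᵀ.mulVec (K⁻¹.mulVec (A.mulVec (u n) - c)))) :
    A.mulVec (A⁻¹.mulVec c) = c ∧
    Tendsto (fun n => A.mulVec (u n)) atTop (𝓝 (A.mulVec (A⁻¹.mulVec c))) := by
  have hc : A *ᵥ (A⁻¹ *ᵥ c) = c := by rw [mulVec_mulVec, mul_nonsing_inv A hA, one_mulVec]
  refine ⟨hc, ?_⟩
  set G := Aᵀ * K⁻¹ * A
  have hG : G.PosDef := by
    simpa [G] using hK.inv.conjTranspose_mul_mul_same
      (mulVec_injective_of_isUnit ((isUnit_iff_isUnit_det A).2 hA))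
  set z : ℕ → Fin N → ℝ := fun n => u n - A⁻¹ *ᵥ c
  have hGz : ∀ n, G *ᵥ z n = Aᵀ *ᵥ (K⁻¹ *ᵥ (A *ᵥ u n - c)) := fun n => by
    rw [← hc, ← mulVec_sub, mulVec_mulVec, mulVec_mulVec]
  have hz : Tendsto z atTop (𝓝 0) := by
    refine tendsto_zero_of_primalDual_iteration hG.isHermitian (s := σ * τ)
      (fun i => mul_pos (mul_pos hσ hτ) (hG.eigenvalues_pos i))
      (fun i => (mul_le_mul_of_nonneg_left ((le_abs_self _).trans
        (hG.isHermitian.abs_eigenvalues_le_norm i)) (mul_pos hσ hτ).le).trans_lt hnorm)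
      (p := fun n => σ • (Aᵀ *ᵥ φ n)) (fun n => ?_) (fun n => ?_)
    · simp only [z, hu n, hGz, mul_assoc 2 σ τ]
      abel
    · simp only [hφ n, hGz, mulVec_add, mulVec_smul, smul_add, smul_smul]
  have hAz : Tendsto (fun n => A *ᵥ z n + c) atTop (𝓝 c) := by
    simpa using (((continuous_const.matrix_mulVec continuous_id).tendsto' 0 0
      (mulVec_zero A)).comp hz).add_const c
  simpa [hc, z, mulVec_sub] using hAz
end

section
/- Let A, K : ℝ^N → ℝ^N with K symmetric positive definite and A invertible, and suppose στ > 0 with στν < 1 for every eigenvalue ν of A^T K^{-1} A. Then the spectral radius of the 2N×2N matrix M = [[I - 2στ A^T K^{-1} A, -σ A^T],[τ K^{-1} A, I]] is strictly less than 1. -/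
/-!
Let `B = AᵀK⁻¹A`, which is symmetric positive definite. If `(x, y)` is an eigenvector of `M` for
`λ`, the second block row gives `τK⁻¹Ax = (λ - 1)y`; substituting into the first row yields
`στ(1 - 2λ) Bx = (1 - λ)² x`, and `x ≠ 0` because `A` is invertible. Hence `λ` satisfies
`(1 - λ)² = t(1 - 2λ)` where `t = στν ∈ (0, 1)` for an eigenvalue `ν > 0` of `B`. The roots of this
quadratic are `1 - t ± i√(t(1 - t))`, so `|λ|² = 1 - t < 1`.
-/

open Matrix

theorem Matrix.IsHermitian.exists_eigenvalues_eq_of_map_mulVec_eq_smul {n : Type*} [Fintype n]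
    [DecidableEq n] {B : Matrix n n ℝ} (hB : B.IsHermitian) {μ : ℂ} {x : n → ℂ} (hx : x ≠ 0)
    (h : B.map Complex.ofReal *ᵥ x = μ • x) : ∃ i, μ = hB.eigenvalues i := by
  have h' : B.map Complex.ofRealHom *ᵥ x = μ • x := h
  have hdet : (scalar n μ - B.map Complex.ofRealHom).det = 0 :=
    exists_mulVec_eq_zero_iff.mp ⟨x, hx, by simp [sub_mulVec, h']⟩
  rw [← eval_charpoly, charpoly_map, hB.charpoly_eq] at hdet
  simpa [Polynomial.eval_prod, Polynomial.map_prod, Finset.prod_eq_zero_iff, sub_eq_zero]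
    using hdet

theorem Matrix.PosDef.transpose_mul_inv_mul_same {n : Type*} [Fintype n] [DecidableEq n]
    {K A : Matrix n n ℝ} (hK : K.PosDef) (hA : IsUnit A.det) : (Aᵀ * K⁻¹ * A).PosDef := by
  simpa using hK.inv.conjTranspose_mul_mul_same
    (mulVec_injective_of_isUnit ((isUnit_iff_isUnit_det A).mpr hA))

theorem Complex.norm_sq_eq_of_one_sub_sq_eq {z : ℂ} {t : ℝ} (ht₀ : 0 < t) (ht₁ : t < 1)
    (h : (1 - z) ^ 2 = t * (1 - 2 * z)) : ‖z‖ ^ 2 = 1 - t := by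
  have hre := congrArg Complex.re h
  have him := congrArg Complex.im h
  simp only [pow_two, mul_re, mul_im, sub_re, sub_im, one_re, one_im, ofReal_re, ofReal_im,
    re_ofNat, im_ofNat] at hre him
  rw [Complex.sq_norm, Complex.normSq_apply]
  have hreal_or_center : (z.re - (1 - t)) * z.im = 0 := by nlinarith
  -- A real root is impossible: the discriminant `4t(t - 1)` is negative.
  rcases mul_eq_zero.mp hreal_or_center with h | h <;> nlinarith

namespace Matrix

theorem fromBlocks_mulVec_elim_eq_smul_iff {m n α : Type*} [Fintype m] [Fintype n]
    [Semiring α] (A : Matrix m m α) (B : Matrix m n α) (C : Matrix n m α) (D : Matrix n n α)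
    (x : m → α) (y : n → α) (c : α) :
    fromBlocks A B C D *ᵥ Sum.elim x y = c • Sum.elim x y ↔
      A *ᵥ x + B *ᵥ y = c • x ∧ C *ᵥ x + D *ᵥ y = c • y := by
  simp [funext_iff, Sum.forall, fromBlocks_mulVec]

variable {n F : Type*} [Fintype n] [DecidableEq n] [Field F] {P Q : Matrix n n F} {s t l : F}

theorem smul_mul_mulVec_eq_sq_smul_of_fromBlocks {x y : n → F}
    (h₁ : (1 - (2 * s * t) • (P * Q)) *ᵥ x + (-(s • P)) *ᵥ y = l • x)
    (h₂ : (t • Q) *ᵥ x + 1 *ᵥ y = l • y) :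
    (s * t * (1 - 2 * l)) • ((P * Q) *ᵥ x) = (1 - l) ^ 2 • x := by
  have hy : t • (Q *ᵥ x) = (l - 1) • y := by
    rw [smul_mulVec, one_mulVec] at h₂
    rw [sub_smul, one_smul, ← h₂]
    abel
  have hPy : (s * t) • (P *ᵥ (Q *ᵥ x)) = (s * (l - 1)) • (P *ᵥ y) := by
    rw [mul_smul, ← mulVec_smul, hy, mulVec_smul, mul_smul]
  rw [sub_mulVec, one_mulVec, smul_mulVec, neg_mulVec, smul_mulVec, ← mulVec_mulVec] at h₁
  rw [← mulVec_mulVec]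
  linear_combination (norm := module) (l - 1) • h₁ - hPy

theorem exists_eigenpair_of_det_fromBlocks_sub_smul_eq_zero (hP : IsUnit P.det) (hst : s * t ≠ 0)
    (h : (fromBlocks (1 - (2 * s * t) • (P * Q)) (-(s • P)) (t • Q) 1 - l • 1).det = 0) :
    ∃ μ, (1 - l) ^ 2 = s * t * μ * (1 - 2 * l) ∧ ∃ x ≠ 0, (P * Q) *ᵥ x = μ • x := by
  obtain ⟨w, hw0, hw⟩ := exists_mulVec_eq_zero_iff.mpr h
  rw [sub_mulVec, smul_mulVec, one_mulVec, sub_eq_zero, ← Sum.elim_comp_inl_inr w,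
    fromBlocks_mulVec_elim_eq_smul_iff] at hw
  obtain ⟨h₁, h₂⟩ := hw
  set x := w ∘ Sum.inl
  set y := w ∘ Sum.inr
  have hx : x ≠ 0 := by
    intro hx
    have hPy : P *ᵥ (s • y) = P *ᵥ 0 := by
      simpa [hx, mulVec_smul, neg_mulVec, smul_mulVec] using h₁
    have hy : y = 0 := by
      simpa [left_ne_zero_of_mul hst] using
        mulVec_injective_of_isUnit ((isUnit_iff_isUnit_det P).mpr hP) hPy
    exact hw0 (by rw [← Sum.elim_comp_inl_inr w]; simp [x, y] at hx hy; simp [hx, hy])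
  have key := smul_mul_mulVec_eq_sq_smul_of_fromBlocks h₁ h₂
  have hc : s * t * (1 - 2 * l) ≠ 0 := by
    intro hc
    rw [hc, zero_smul, eq_comm, smul_eq_zero] at key
    have hl : l = 1 :=
      (sub_eq_zero.mp (pow_eq_zero_iff two_ne_zero |>.mp (key.resolve_right hx))).symm
    rw [hl] at hc
    norm_num [hst] at hc
  refine ⟨(1 - l) ^ 2 / (s * t * (1 - 2 * l)), by rw [mul_right_comm, mul_div_cancel₀ _ hc],
    x, hx, ?_⟩
  rw [div_eq_inv_mul, mul_smul, ← key, inv_smul_smul₀ hc]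

end Matrix

/-- If στν < 1 for every eigenvalue ν of AᵀK⁻¹A (A invertible, K SPD, στ > 0),
then the spectral radius of M = [[I - 2στ AᵀK⁻¹A, -σAᵀ],[τK⁻¹A, I]] is < 1:
every complex eigenvalue λ of M satisfies |λ| < 1. -/
theorem stmt_3 {N : ℕ} (A K : Matrix (Fin N) (Fin N) ℝ)
    (hA : IsUnit A.det) (hK : K.PosDef) (σ τ : ℝ) (hστ : 0 < σ * τ)
    (heig : ∀ ν : ℝ, (∃ v : Fin N → ℝ, v ≠ 0 ∧ (Aᵀ * K⁻¹ * A).mulVec v = ν • v) →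
      σ * τ * ν < 1) :
    let M : Matrix (Fin N ⊕ Fin N) (Fin N ⊕ Fin N) ℝ :=
      Matrix.fromBlocks (1 - (2 * σ * τ) • (Aᵀ * K⁻¹ * A)) (-(σ • Aᵀ)) (τ • (K⁻¹ * A)) 1
    ∀ lam : ℂ, ((M.map Complex.ofReal) - lam • 1).det = 0 → ‖lam‖ < 1 := by
  intro M lam hdet
  set P := Aᵀ.map Complex.ofReal
  set Q := (K⁻¹ * A).map Complex.ofReal
  have hM : M.map Complex.ofReal =
      fromBlocks (1 - (2 * σ * τ : ℂ) • (P * Q)) (-((σ : ℂ) • P)) ((τ : ℂ) • Q) 1 := by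
    simp only [M, fromBlocks_map]
    congr 1 <;> ext i j <;>
      simp [P, Q, mul_apply, one_apply, Matrix.mul_assoc, apply_ite Complex.ofReal]
  have hP : IsUnit P.det := by
    have hPdet : P.det = Complex.ofRealHom Aᵀ.det := (Complex.ofRealHom.map_det Aᵀ).symm
    rw [hPdet, det_transpose]
    exact hA.map _
  obtain ⟨μ, hquad, x, hx, hPQ⟩ := exists_eigenpair_of_det_fromBlocks_sub_smul_eq_zero hP
    (by exact_mod_cast hστ.ne') (hM ▸ hdet)
  have hB := hK.transpose_mul_inv_mul_same hA
  have hBPQ : (Aᵀ * K⁻¹ * A).map Complex.ofReal = P * Q := by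
    rw [Matrix.mul_assoc]
    exact Matrix.map_mul (f := Complex.ofRealHom)
  obtain ⟨i, rfl⟩ := hB.isHermitian.exists_eigenvalues_eq_of_map_mulVec_eq_smul hx (hBPQ ▸ hPQ)
  have ht : 0 < σ * τ * hB.isHermitian.eigenvalues i := mul_pos hστ (hB.eigenvalues_pos i)
  have hlt := heig _ ⟨_, fun h => hB.isHermitian.eigenvectorBasis.orthonormal.ne_zero i
    (by ext j; exact congrFun h j), hB.isHermitian.mulVec_eigenvectorBasis i⟩
  have hnorm := Complex.norm_sq_eq_of_one_sub_sq_eq (z := lam) ht hlt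
    (by push_cast; linear_combination hquad)
  exact (sq_lt_one_iff₀ (norm_nonneg lam)).mp (by linarith)
end
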